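/- arXiv:1710.05430 — 2 statements merged into one kernel-verified Lean document; each statement's English description precedes it below -/
import Mathlib

section
/- There exists a constant C ≥ 1, depending only on the Schottky data, such that for every nonempty word a = a_1…a_n and every z ∈ D_{a_n}, one has C^{−1}|I_a| ≤ |γ_{a'}'(z)| ≤ C|I_a|, where γ_{a'}' denotes the complex derivative of the Möbius transformation γ_{a'} (which has no pole on D_{a_n}). -/
open Complex MeasureTheory Metric Set
open scoped Real

noncomputable section


abbrev SL2R := Matrix.SpecialLinearGroup (Fin 2) ℝ

/-- Entries of a matrix in `SL(2,ℝ)`, as complex numbers. -/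
def mA (g : SL2R) : ℂ := ((g.1 0 0 : ℝ) : ℂ)
def mB (g : SL2R) : ℂ := ((g.1 0 1 : ℝ) : ℂ)
def mC (g : SL2R) : ℂ := ((g.1 1 0 : ℝ) : ℂ)
def mD (g : SL2R) : ℂ := ((g.1 1 1 : ℝ) : ℂ)

/-- The Möbius action of `SL(2,ℝ)` on the Riemann sphere `ℂ ∪ {∞}`. -/
def moebius (g : SL2R) : OnePoint ℂ → OnePoint ℂ := fun z =>
  match z with
  | OnePoint.infty => if mC g = 0 then OnePoint.infty else ((mA g / mC g : ℂ) : OnePoint ℂ)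
  | (w : ℂ) => if mC g * w + mD g = 0 then OnePoint.infty
      else (((mA g * w + mB g) / (mC g * w + mD g) : ℂ) : OnePoint ℂ)

/-- The Möbius action on `ℂ`, with junk value at the pole. -/
def moebiusC (g : SL2R) (z : ℂ) : ℂ := (mA g * z + mB g) / (mC g * z + mD g)

/-- The Möbius action on `ℝ`, with junk value at the pole. -/
def moebiusR (g : SL2R) (x : ℝ) : ℝ :=
  (g.1 0 0 * x + g.1 0 1) / (g.1 1 0 * x + g.1 1 1)

/-- The complex derivative `γ'(z) = (cz+d)⁻²` of a Möbius transformation (`det = 1`). -/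
def dMob (g : SL2R) (z : ℂ) : ℂ := ((mC g * z + mD g)⁻¹) ^ 2

/-- The involution `a ↦ ā` on the alphabet `{1, …, 2r}` (as `Fin (2*r)`). -/
def bar {r : ℕ} (a : Fin (2 * r)) : Fin (2 * r) :=
  if h : (a : ℕ) < r then ⟨(a : ℕ) + r, by omega⟩
  else ⟨(a : ℕ) - r, by have := a.isLt; omega⟩

/-- Schottky data: `2r` pairwise disjoint closed disks centered on the real axis and
`2r` elements of `SL(2,ℝ)` with `γ_a((ℂ∪{∞}) \ interior D_{ā}) = D_a`, `γ_ā = γ_a⁻¹`. -/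
structure Schottky (r : ℕ) where
  hr : 1 ≤ r
  center : Fin (2 * r) → ℝ
  radius : Fin (2 * r) → ℝ
  radius_pos : ∀ a, 0 < radius a
  disj : Pairwise fun a b =>
    Disjoint (closedBall ((center a : ℝ) : ℂ) (radius a)) (closedBall ((center b : ℝ) : ℂ) (radius b))
  γ : Fin (2 * r) → SL2R
  γ_bar : ∀ a, γ (bar a) = (γ a)⁻¹
  γ_maps : ∀ a, moebius (γ a) ''
      (univ \ ((fun z : ℂ => (z : OnePoint ℂ)) '' interior (closedBall ((center (bar a) : ℝ) : ℂ) (radius (bar a)))))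
    = (fun z : ℂ => (z : OnePoint ℂ)) '' closedBall ((center a : ℝ) : ℂ) (radius a)

/-- Words: finite sequences of letters with `a_{j+1} ≠ ā_j`. -/
def IsWord {r : ℕ} (w : List (Fin (2 * r))) : Prop := w.Chain' fun x y => y ≠ bar x

/-- The word `ā := ā_n ⋯ ā_1`. -/
def barWord {r : ℕ} (w : List (Fin (2 * r))) : List (Fin (2 * r)) := (w.map bar).reverse

namespace Schottky

variable {r : ℕ} (S : Schottky r)

/-- The disk `D_a` for a letter `a`. -/
def disk (a : Fin (2 * r)) : Set ℂ := closedBall ((S.center a : ℝ) : ℂ) (S.radius a)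

/-- `γ_w := γ_{a_1} ⋯ γ_{a_n}`. -/
def g (w : List (Fin (2 * r))) : SL2R := (w.map S.γ).prod

/-- The disk `D_w := γ_{w'}(D_{a_n})` of a nonempty word, as a subset of the Riemann sphere. -/
def sdisk : List (Fin (2 * r)) → Set (OnePoint ℂ)
  | [] => ∅
  | a :: w => moebius (S.g ((a :: w).dropLast)) ''
      ((fun z : ℂ => (z : OnePoint ℂ)) '' S.disk ((a :: w).getLast (List.cons_ne_nil a w)))

/-- The disk `D_w` as a subset of `ℂ`. -/
def wdisk (w : List (Fin (2 * r))) : Set ℂ := {z : ℂ | (z : OnePoint ℂ) ∈ S.sdisk w}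

/-- The interval `I_w = D_w ∩ ℝ`, as a subset of `ℝ`. -/
def wint (w : List (Fin (2 * r))) : Set ℝ := {x : ℝ | ((x : ℝ) : ℂ) ∈ S.wdisk w}

/-- The length `|I_w|` of the interval `I_w`. -/
def wlen (w : List (Fin (2 * r))) : ℝ := Metric.diam (S.wint w)

/-- `D = ⋃_{a ∈ A} D_a`. -/
def D : Set ℂ := ⋃ a, S.disk a

/-- `I = D ∩ ℝ`, as a subset of `ℝ`. -/
def Ire : Set ℝ := {x : ℝ | ((x : ℝ) : ℂ) ∈ S.D}

/-- `D₂ = ⋃_{|w| = 2} D_w`. -/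
def D₂ : Set ℂ := ⋃ (a : Fin (2 * r)), ⋃ (b : Fin (2 * r)), ⋃ (_ : b ≠ bar a), S.wdisk [a, b]

/-- `I'_a` for a letter `a`: the convex hull of `⋃_{b ≠ ā} I_{ab}`. -/
def iprimeLetter (a : Fin (2 * r)) : Set ℝ :=
  convexHull ℝ (⋃ (b : Fin (2 * r)), ⋃ (_ : b ≠ bar a), S.wint [a, b])

/-- `I'_w := γ_{w'}(I'_{a_n})` for a nonempty word `w`. -/
def iprime : List (Fin (2 * r)) → Set ℝ
  | [] => ∅
  | a :: w => moebiusR (S.g ((a :: w).dropLast)) ''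
      S.iprimeLetter ((a :: w).getLast (List.cons_ne_nil a w))

/-- The partition `Z(τ)`. -/
def Ztau (τ : ℝ) : Set (List (Fin (2 * r))) :=
  {w | w ≠ [] ∧ IsWord w ∧ S.wlen w ≤ τ ∧ (w.dropLast = [] ∨ τ < S.wlen w.dropLast)}

/-- The limit set `Λ_Γ ⊂ ℝ`. -/
def limitSet : Set ℝ :=
  {x : ℝ | ∀ n : ℕ, 1 ≤ n → ∃ w : List (Fin (2 * r)), IsWord w ∧ w.length = n ∧ x ∈ S.wint w}

/-- The τ-neighbourhood `Λ_Γ(τ) ⊂ ℝ` of the limit set. -/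
def limitSetNbhd (τ : ℝ) : Set ℝ := {x : ℝ | ∃ y ∈ S.limitSet, |x - y| ≤ τ}

end Schottky

/-- `ℓ` is a holomorphic branch on `U` of the logarithm of the derivative of the Möbius
transformation of `g`, real on `U ∩ ℝ`. -/
structure IsLogBranch (g : SL2R) (U : Set ℂ) (ℓ : ℂ → ℂ) : Prop where
  holo : DifferentiableOn ℂ ℓ U
  exp_eq : ∀ z ∈ U, Complex.exp (ℓ z) = dMob g z
  real_on : ∀ x : ℝ, ((x : ℝ) : ℂ) ∈ U → (ℓ ((x : ℝ) : ℂ)).im = 0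

/-- A family of branches `ℓ a b` of `log γ_a'` on `D_b`, for all `a ≠ b̄`. -/
def IsBranchFamily {r : ℕ} (S : Schottky r) (ℓ : Fin (2 * r) → Fin (2 * r) → ℂ → ℂ) : Prop :=
  ∀ a b : Fin (2 * r), a ≠ bar b → IsLogBranch (S.γ a) (S.disk b) (ℓ a b)

/-- The fixed-point equation `L_s u = u` on the interior of `D`, written pointwise. -/
def TransferFixed {r : ℕ} (S : Schottky r) (s : ℂ)
    (ℓ : Fin (2 * r) → Fin (2 * r) → ℂ → ℂ) (u : ℂ → ℂ) : Prop :=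
  ∀ b : Fin (2 * r), ∀ z ∈ interior (S.disk b),
    u z = ∑ a : Fin (2 * r), if a ≠ bar b then
      Complex.exp (s * ℓ a b z) * u (moebiusC (S.γ a) z) else 0

/-- The transfer operator `L_s`, as an operator on functions. -/
def transferOp {r : ℕ} (S : Schottky r) (s : ℂ)
    (ℓ : Fin (2 * r) → Fin (2 * r) → ℂ → ℂ) (u : ℂ → ℂ) : ℂ → ℂ := fun z =>
  ∑ b : Fin (2 * r), (S.disk b).indicator
    (fun w => ∑ a : Fin (2 * r), if a ≠ bar b then
      Complex.exp (s * ℓ a b w) * u (moebiusC (S.γ a) w) else 0) z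

/-- A partition: a finite set of nonempty words such that every long enough word
has exactly one prefix in it. -/
def IsPartition {r : ℕ} (S : Schottky r) (Z : Finset (List (Fin (2 * r)))) : Prop :=
  (∀ w ∈ Z, w ≠ [] ∧ IsWord w) ∧
  ∃ N : ℕ, ∀ w : List (Fin (2 * r)), IsWord w → N ≤ w.length →
    ∃! p : List (Fin (2 * r)), p ∈ Z ∧ p <+: w

/-!
For a word `w a`, the nesting of the Schottky disks puts the pole `-d/c` of `γ_w` in a disk
`D_b` with `b ≠ a`. Since distinct disks are at positive distance, `|cz + d| = |c| |z + d/c|`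
varies on `D_a` at most by a factor depending only on the Schottky data. Now
`|γ_w'(z)| = |cz + d|⁻²`, and `I_{wa} = γ_w(I_a)` is the image of `I_a = [l, u]` under a monotone
Möbius map, so `|I_{wa}| = 2ρ_a / (|cu + d| |cl + d|)`; comparing the three denominators
gives the claim.
-/

lemma mul_pos_of_continuousOn_Icc {f : ℝ → ℝ} {l u : ℝ} (hf : ContinuousOn f (Icc l u))
    (hf0 : ∀ x ∈ Icc l u, f x ≠ 0) {s t : ℝ} (hs : s ∈ Icc l u) (ht : t ∈ Icc l u) :
    0 < f s * f t := by
  by_contra! hst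
  have h0 : (0 : ℝ) ∈ uIcc (f s) (f t) := by
    rcases mul_nonpos_iff.mp hst with h | h
    · exact mem_uIcc.mpr (Or.inr ⟨h.2, h.1⟩)
    · exact mem_uIcc.mpr (Or.inl ⟨h.1, h.2⟩)
  have hsub : uIcc s t ⊆ Icc l u := uIcc_subset_Icc hs ht
  obtain ⟨x, hx, hfx⟩ := intermediate_value_uIcc (hf.mono hsub) h0
  exact hf0 x (hsub hx) hfx

lemma exists_dist_le_mul_dist {α : Type*} [MetricSpace α] {A B : Set α} (hA : IsCompact A)
    (hB : IsCompact B) (hAB : Disjoint A B) :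
    ∃ K : ℝ, ∀ z ∈ A, ∀ z' ∈ A, ∀ p ∈ B, dist z p ≤ K * dist z' p := by
  obtain ⟨δ, hδ, hsep⟩ := exists_pos_forall_lt_edist hA hB.isClosed hAB
  have hδ' : (0 : ℝ) < δ := hδ
  set M := diam (A ∪ B)
  refine ⟨M / δ, fun z hz z' hz' p hp => ?_⟩
  have hM : dist z p ≤ M :=
    dist_le_diam_of_mem (hA.union hB).isBounded (Or.inl hz) (Or.inr hp)
  have hsep' : (δ : ℝ) < dist z' p := by
    have := hsep z' hz' p hp
    rwa [edist_nndist, ENNReal.coe_lt_coe, ← NNReal.coe_lt_coe, coe_nndist] at this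
  calc dist z p ≤ M / δ * δ := by rwa [div_mul_cancel₀ M hδ'.ne']
    _ ≤ M / δ * dist z' p := by gcongr

lemma inv_mul_div_le_inv_sq_and_inv_sq_le {K R C X U L ρ : ℝ} (hX : 0 < X) (hU : 0 < U)
    (hL : 0 < L) (hρ : 0 < ρ) (hXU : X ≤ K * U) (hXL : X ≤ K * L) (hUX : U ≤ K * X)
    (hLX : L ≤ K * X) (hρR : ρ ≤ R) (hρR' : ρ⁻¹ ≤ R) (hC : K ^ 2 * R ≤ C) :
    C⁻¹ * (ρ / (U * L)) ≤ (X ^ 2)⁻¹ ∧ (X ^ 2)⁻¹ ≤ C * (ρ / (U * L)) := by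
  have hK : 0 < K := pos_of_mul_pos_left (hX.trans_le hXU) hU.le
  have hR : 0 < R := hρ.trans_le hρR
  have hC0 : 0 < C := (by positivity : 0 < K ^ 2 * R).trans_le hC
  constructor
  · rw [inv_mul_eq_div, div_div, inv_eq_one_div, div_le_div_iff₀ (by positivity) (by positivity)]
    calc ρ * X ^ 2 ≤ R * ((K * U) * (K * L)) := by gcongr; rw [sq]; gcongr
      _ = K ^ 2 * R * (U * L) := by ring
      _ ≤ 1 * (U * L * C) := by rw [one_mul, mul_comm (U * L)]; gcongr
  · rw [mul_div_assoc', inv_eq_one_div, div_le_div_iff₀ (by positivity) (by positivity)]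
    have hRρ : 1 ≤ R * ρ := by rwa [inv_le_iff_one_le_mul₀ hρ] at hρR'
    calc 1 * (U * L) ≤ (K * X) * (K * X) := by rw [one_mul]; gcongr
      _ = K ^ 2 * X ^ 2 * 1 := by ring
      _ ≤ K ^ 2 * X ^ 2 * (R * ρ) := by gcongr
      _ = K ^ 2 * R * ρ * X ^ 2 := by ring
      _ ≤ C * ρ * X ^ 2 := by gcongr

def denom (g : SL2R) (z : ℂ) : ℂ := mC g * z + mD g

def denomR (g : SL2R) (t : ℝ) : ℝ := g.1 1 0 * t + g.1 1 1

lemma denom_ofReal (g : SL2R) (t : ℝ) : denom g t = denomR g t := by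
  simp [denom, denomR, mC, mD]

lemma norm_dMob (g : SL2R) (z : ℂ) : ‖dMob g z‖ = (‖denom g z‖ ^ 2)⁻¹ := by
  simp [dMob, denom]

lemma norm_denom_eq_mul_dist {g : SL2R} (hc : mC g ≠ 0) (z : ℂ) :
    ‖denom g z‖ = ‖mC g‖ * dist z (-mD g / mC g) := by
  rw [dist_eq_norm, ← norm_mul, denom]
  congr 1
  field_simp
  ring

lemma moebiusR_sub_moebiusR {g : SL2R} {s t : ℝ} (hs : denomR g s ≠ 0) (ht : denomR g t ≠ 0) :
    moebiusR g t - moebiusR g s = (t - s) / (denomR g t * denomR g s) := by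
  have hdet := g.det_coe
  rw [Matrix.det_fin_two] at hdet
  unfold denomR at *
  rw [moebiusR, moebiusR, div_sub_div _ _ ht hs, div_eq_div_iff (mul_ne_zero ht hs)
    (mul_ne_zero ht hs)]
  linear_combination ((t - s) * ((g.1 1 0 * t + g.1 1 1) * (g.1 1 0 * s + g.1 1 1))) * hdet

def toGLC : SL2R →* GL (Fin 2) ℂ :=
  (Matrix.GeneralLinearGroup.map Complex.ofRealHom).comp Matrix.SpecialLinearGroup.toGL

lemma moebius_eq_smul (g : SL2R) (z : OnePoint ℂ) : moebius g z = toGLC g • z := by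
  cases z with
  | infty => simp [moebius, OnePoint.smul_infty_eq_ite, toGLC, mA, mC,
      Matrix.GeneralLinearGroup.map_apply]
  | coe z =>
    simp only [moebius, OnePoint.smul_some_eq_ite, toGLC, mA, mB, mC, mD, MonoidHom.coe_comp,
      Function.comp_apply, Matrix.GeneralLinearGroup.map_apply,
      Matrix.SpecialLinearGroup.coe_GL_coe_matrix, ofRealHom_eq_coe]
    congr

lemma moebius_mul (g h : SL2R) (z : OnePoint ℂ) :
    moebius (g * h) z = moebius g (moebius h z) := by
  simp [moebius_eq_smul, mul_smul]

lemma moebius_one (z : OnePoint ℂ) : moebius 1 z = z := by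
  simp [moebius_eq_smul]

lemma moebius_coe (g : SL2R) (z : ℂ) :
    moebius g z = if denom g z = 0 then OnePoint.infty else (moebiusC g z : OnePoint ℂ) := rfl

lemma moebius_ofReal {g : SL2R} {t : ℝ} (ht : denomR g t ≠ 0) :
    moebius g ((t : ℂ) : OnePoint ℂ) = ((moebiusR g t : ℂ) : OnePoint ℂ) := by
  rw [moebius_coe, denom_ofReal, if_neg (by exact_mod_cast ht)]
  simp [moebiusC, moebiusR, mA, mB, mC, mD]

lemma exists_ofReal_of_moebius_eq_ofReal {g : SL2R} {z : ℂ} {x : ℝ}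
    (h : moebius g z = ((x : ℂ) : OnePoint ℂ)) : ∃ t : ℝ, z = t := by
  have hz : (z : OnePoint ℂ) = moebius g⁻¹ ((x : ℂ) : OnePoint ℂ) := by
    rw [← h, ← moebius_mul, inv_mul_cancel, moebius_one]
  by_cases hx : denomR g⁻¹ x = 0
  · rw [moebius_coe, denom_ofReal, hx, Complex.ofReal_zero, if_pos rfl] at hz
    exact absurd hz (OnePoint.coe_ne_infty z)
  · rw [moebius_ofReal hx] at hz
    exact ⟨_, OnePoint.coe_injective hz⟩

lemma continuousOn_moebiusR {g : SL2R} {s : Set ℝ} (hg : ∀ t ∈ s, denomR g t ≠ 0) :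
    ContinuousOn (moebiusR g) s :=
  ContinuousOn.div (by fun_prop) (by fun_prop) hg

lemma monotoneOn_moebiusR {g : SL2R} {l u : ℝ} (hg : ∀ t ∈ Icc l u, denomR g t ≠ 0) :
    MonotoneOn (moebiusR g) (Icc l u) := by
  intro s hs t ht hst
  have hpos := mul_pos_of_continuousOn_Icc (f := denomR g) (by unfold denomR; fun_prop) hg ht hs
  rw [← sub_nonneg, moebiusR_sub_moebiusR (hg s hs) (hg t ht)]
  exact div_nonneg (sub_nonneg.mpr hst) hpos.le

lemma diam_moebiusR_image_Icc {g : SL2R} {l u : ℝ} (hlu : l ≤ u)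
    (hg : ∀ t ∈ Icc l u, denomR g t ≠ 0) :
    diam (moebiusR g '' Icc l u) = (u - l) / (|denomR g u| * |denomR g l|) := by
  have hl : l ∈ Icc l u := left_mem_Icc.mpr hlu
  have hu : u ∈ Icc l u := right_mem_Icc.mpr hlu
  rw [(continuousOn_moebiusR hg).image_Icc_of_monotoneOn hlu (monotoneOn_moebiusR hg),
    Real.diam_Icc (monotoneOn_moebiusR hg hl hu hlu), moebiusR_sub_moebiusR (hg l hl) (hg u hu),
    ← abs_mul, abs_of_pos (mul_pos_of_continuousOn_Icc (by unfold denomR; fun_prop) hg hu hl)]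

lemma IsWord.of_append_singleton {r : ℕ} {w : List (Fin (2 * r))} {a : Fin (2 * r)}
    (h : IsWord (w ++ [a])) : IsWord w :=
  (List.isChain_append.mp h).1

lemma IsWord.ne_bar_getLast {r : ℕ} {w : List (Fin (2 * r))} {a : Fin (2 * r)}
    (h : IsWord (w ++ [a])) (hw : w ≠ []) : a ≠ bar (w.getLast hw) :=
  (List.isChain_append.mp h).2.2 _ (by simp [List.getLast?_eq_some_getLast hw]) a rfl

namespace Schottky

variable {r : ℕ} (S : Schottky r)

lemma g_cons (a : Fin (2 * r)) (w : List (Fin (2 * r))) : S.g (a :: w) = S.γ a * S.g w := by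
  simp [g]

lemma g_nil : S.g [] = 1 := rfl

lemma coe_disk_subset_compl {a b : Fin (2 * r)} (hab : a ≠ b) :
    (↑) '' S.disk a ⊆ ((↑) '' interior (S.disk b) : Set (OnePoint ℂ))ᶜ := by
  rintro _ ⟨z, hz, rfl⟩ h
  exact Set.disjoint_left.mp (S.disj hab) hz
    (interior_subset (OnePoint.coe_injective.mem_set_image.mp h))

lemma mapsTo_moebius_γ (a : Fin (2 * r)) :
    MapsTo (moebius (S.γ a)) ((↑) '' interior (S.disk (bar a)))ᶜ ((↑) '' S.disk a) := by
  rw [mapsTo_iff_image_subset, compl_eq_univ_sdiff]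
  exact (S.γ_maps a).le

lemma mapsTo_moebius_g : ∀ (a : Fin (2 * r)) (w : List (Fin (2 * r))), IsWord (a :: w) →
    MapsTo (moebius (S.g (a :: w)))
      ((↑) '' interior (S.disk (bar ((a :: w).getLast (List.cons_ne_nil a w)))))ᶜ
      ((↑) '' S.disk a)
  | a, [], _ => by simpa [g] using S.mapsTo_moebius_γ a
  | a, b :: w, h => by
    obtain ⟨hab, hw⟩ := List.isChain_cons_cons.mp h
    have hcomp : moebius (S.g (a :: b :: w)) = moebius (S.γ a) ∘ moebius (S.g (b :: w)) :=
      funext fun z => by rw [g_cons, moebius_mul]; rfl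
    rw [hcomp, List.getLast_cons (List.cons_ne_nil b w)]
    exact (S.mapsTo_moebius_γ a).comp
      ((mapsTo_moebius_g b w hw).mono_right (S.coe_disk_subset_compl hab))

lemma exists_mem_disk_of_denom_eq_zero {w : List (Fin (2 * r))} {a : Fin (2 * r)}
    (hw : IsWord (w ++ [a])) {z : ℂ} (hz : denom (S.g w) z = 0) : ∃ b ≠ a, z ∈ S.disk b := by
  cases w with
  | nil => simp [denom, g_nil, mC, mD] at hz
  | cons c w =>
    refine ⟨_, (hw.ne_bar_getLast (List.cons_ne_nil c w)).symm, ?_⟩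
    by_contra hzb
    have hinfty := S.mapsTo_moebius_g c w hw.of_append_singleton
      fun h => hzb (interior_subset (OnePoint.coe_injective.mem_set_image.mp h))
    rw [moebius_coe, if_pos hz] at hinfty
    obtain ⟨y, -, hy⟩ := hinfty
    exact OnePoint.coe_ne_infty y hy

lemma denom_ne_zero {w : List (Fin (2 * r))} {a : Fin (2 * r)} (hw : IsWord (w ++ [a]))
    {z : ℂ} (hz : z ∈ S.disk a) : denom (S.g w) z ≠ 0 := fun h0 =>
  have ⟨_, hba, hzb⟩ := S.exists_mem_disk_of_denom_eq_zero hw h0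
  Set.disjoint_left.mp (S.disj hba.symm) hz hzb

lemma ofReal_mem_disk {a : Fin (2 * r)} {t : ℝ} :
    (t : ℂ) ∈ S.disk a ↔ t ∈ Icc (S.center a - S.radius a) (S.center a + S.radius a) := by
  rw [disk, mem_closedBall, Complex.isometry_ofReal.dist_eq, ← mem_closedBall,
    Real.closedBall_eq_Icc]

lemma denomR_ne_zero {w : List (Fin (2 * r))} {a : Fin (2 * r)} (hw : IsWord (w ++ [a])) :
    ∀ t ∈ Icc (S.center a - S.radius a) (S.center a + S.radius a), denomR (S.g w) t ≠ 0 :=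
  fun t ht h0 => S.denom_ne_zero hw (S.ofReal_mem_disk.mpr ht) (by simp [denom_ofReal, h0])

lemma sdisk_append_singleton (w : List (Fin (2 * r))) (a : Fin (2 * r)) :
    S.sdisk (w ++ [a]) = moebius (S.g w) '' ((↑) '' S.disk a) := by
  cases w with
  | nil => rfl
  | cons c w =>
    simp only [List.cons_append, sdisk]
    simp only [← List.cons_append, List.dropLast_concat, List.getLast_concat]

lemma wint_append_singleton {w : List (Fin (2 * r))} {a : Fin (2 * r)} (hw : IsWord (w ++ [a])) :
    S.wint (w ++ [a])
      = moebiusR (S.g w) '' Icc (S.center a - S.radius a) (S.center a + S.radius a) := by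
  ext x
  simp only [wint, wdisk, mem_ofPred_eq, S.sdisk_append_singleton, mem_image]
  constructor
  · rintro ⟨_, ⟨y, hy, rfl⟩, hyx⟩
    obtain ⟨t, rfl⟩ := exists_ofReal_of_moebius_eq_ofReal hyx
    have ht := S.ofReal_mem_disk.mp hy
    rw [moebius_ofReal (S.denomR_ne_zero hw t ht)] at hyx
    exact ⟨t, ht, Complex.ofReal_injective (OnePoint.coe_injective hyx)⟩
  · rintro ⟨t, ht, rfl⟩
    exact ⟨_, ⟨t, S.ofReal_mem_disk.mpr ht, rfl⟩, moebius_ofReal (S.denomR_ne_zero hw t ht)⟩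

lemma wlen_append_singleton {w : List (Fin (2 * r))} {a : Fin (2 * r)} (hw : IsWord (w ++ [a])) :
    S.wlen (w ++ [a]) = 2 * S.radius a / (‖denom (S.g w) ↑(S.center a + S.radius a)‖ *
      ‖denom (S.g w) ↑(S.center a - S.radius a)‖) := by
  rw [wlen, S.wint_append_singleton hw,
    diam_moebiusR_image_Icc (by linarith [S.radius_pos a]) (S.denomR_ne_zero hw)]
  simp only [denom_ofReal, Complex.norm_real, Real.norm_eq_abs]
  congr 1
  ring

lemma exists_norm_denom_le : ∃ K : ℝ, ∀ (w : List (Fin (2 * r))) (a : Fin (2 * r)),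
    IsWord (w ++ [a]) → ∀ z ∈ S.disk a, ∀ z' ∈ S.disk a,
      ‖denom (S.g w) z‖ ≤ K * ‖denom (S.g w) z'‖ := by
  have hK : ∀ a b : Fin (2 * r), ∃ K : ℝ, a ≠ b →
      ∀ z ∈ S.disk a, ∀ z' ∈ S.disk a, ∀ p ∈ S.disk b, dist z p ≤ K * dist z' p := fun a b =>
    if hab : a = b then ⟨0, fun h => absurd hab h⟩
    else (exists_dist_le_mul_dist (isCompact_closedBall _ _) (isCompact_closedBall _ _)
      (S.disj hab)).imp fun _ h _ => h
  choose K hK using hK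
  obtain ⟨M, hM⟩ := (Set.finite_range fun p : Fin (2 * r) × Fin (2 * r) => K p.1 p.2).bddAbove
  refine ⟨max 1 M, fun w a hw z hz z' hz' => ?_⟩
  by_cases hc : mC (S.g w) = 0
  · simp only [denom, hc, zero_mul, zero_add]
    exact le_mul_of_one_le_left (norm_nonneg _) (le_max_left _ _)
  obtain ⟨b, hba, hp⟩ := S.exists_mem_disk_of_denom_eq_zero hw (z := -mD (S.g w) / mC (S.g w))
    (by rw [denom]; field_simp; ring)
  have hKM : K a b ≤ max 1 M := (hM ⟨(a, b), rfl⟩).trans (le_max_right _ _)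
  rw [norm_denom_eq_mul_dist hc, norm_denom_eq_mul_dist hc, mul_left_comm]
  gcongr
  exact (hK a b hba.symm z hz z' hz' _ hp).trans (mul_le_mul_of_nonneg_right hKM dist_nonneg)

lemma exists_radius_le : ∃ R : ℝ, ∀ a, 2 * S.radius a ≤ R ∧ (2 * S.radius a)⁻¹ ≤ R := by
  obtain ⟨R, hR⟩ :=
    (Set.finite_range fun a => max (2 * S.radius a) (2 * S.radius a)⁻¹).bddAbove
  exact ⟨R, fun a => max_le_iff.mp (hR ⟨a, rfl⟩)⟩

end Schottky

/-- There is `C ≥ 1` depending only on the Schottky data such that for every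
nonempty word `w ++ [a]` and every `z ∈ D_a`, the Möbius transformation `γ_{(w++[a])'} = γ_w`
has no pole on `D_a` and `C⁻¹|I_{w++[a]}| ≤ |γ_w'(z)| ≤ C|I_{w++[a]}|`. -/
theorem stmt0 {r : ℕ} (S : Schottky r) :
    ∃ C : ℝ, 1 ≤ C ∧ ∀ (w : List (Fin (2 * r))) (a : Fin (2 * r)), IsWord (w ++ [a]) →
      ∀ z ∈ S.disk a,
        mC (S.g w) * z + mD (S.g w) ≠ 0 ∧
        C⁻¹ * S.wlen (w ++ [a]) ≤ ‖dMob (S.g w) z‖ ∧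
        ‖dMob (S.g w) z‖ ≤ C * S.wlen (w ++ [a]) := by
  obtain ⟨K, hK⟩ := S.exists_norm_denom_le
  obtain ⟨R, hR⟩ := S.exists_radius_le
  refine ⟨max 1 (K ^ 2 * R), le_max_left _ _, fun w a hw z hz => ⟨S.denom_ne_zero hw hz, ?_⟩⟩
  have hu : ((S.center a + S.radius a : ℝ) : ℂ) ∈ S.disk a :=
    S.ofReal_mem_disk.mpr ⟨by linarith [S.radius_pos a], le_rfl⟩
  have hl : ((S.center a - S.radius a : ℝ) : ℂ) ∈ S.disk a :=
    S.ofReal_mem_disk.mpr ⟨le_rfl, by linarith [S.radius_pos a]⟩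
  have hpos : ∀ z' ∈ S.disk a, 0 < ‖denom (S.g w) z'‖ :=
    fun z' hz' => norm_pos_iff.mpr (S.denom_ne_zero hw hz')
  rw [S.wlen_append_singleton hw, norm_dMob]
  exact inv_mul_div_le_inv_sq_and_inv_sq_le (hpos z hz) (hpos _ hu) (hpos _ hl)
    (by linarith [S.radius_pos a]) (hK w a hw _ hz _ hu) (hK w a hw _ hz _ hl)
    (hK w a hw _ hu _ hz) (hK w a hw _ hl _ hz) (hR a).1 (hR a).2 (le_max_right _ _)
end
end

section
/- There exists c ∈ (0,1], depending only on the Schottky data, with the following property for each choice of sign ±: if f is continuous on D^± := D ∩ {z : ±Im z ≥ 0} and holomorphic on the interior of D^±, then sup over D₂^± of |f| is at most (sup over I of |f|)^c times (sup over D^± of |f|)^{1−c}, where D₂ := ⋃_{words a of length 2} D_a and D₂^± := D₂ ∩ {z : ±Im z ≥ 0}. -/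
open Complex MeasureTheory Metric Set
open scoped Real

noncomputable section

/-!
Each two-letter disk `D_{ab}` is a compact subset of the open disk `D_a`: `γ_a` maps `D_b` into
`D_a`, and a point of `∂D_a` would be sent by `γ_ā = γ_a⁻¹` into `D_ā`, which is disjoint from
`D_b`. Hence `D₂` lies, disk by disk, in concentric disks of relative radius `t < 1`.

The map `s ↦ (e^{iπs/2} - 1)/(e^{iπs/2} + 1)` sends the strip `0 ≤ Re s ≤ 1` into the closed upper
unit half disk, covering all of it inside the open unit disk; the line `Re s = 0` goes into the
diameter `[-1, 1]` and `Re s = 1` into the semicircle. Hadamard's three-lines theorem bounds `|f|`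
at the image of `s` by `(sup_I |f|)^(1 - Re s) (sup |f|)^(Re s)`, and by compactness `Re s` stays
below some `1 - c < 1` on the part `|p| ≤ t` of the half disk.
-/

open Complex.HadamardThreeLines

lemma rpow_mul_rpow_one_sub_le_of_le {a b x y : ℝ} (ha : 0 ≤ a) (hab : a ≤ b) (hx : 0 ≤ x)
    (hxy : x ≤ y) : a ^ y * b ^ (1 - y) ≤ a ^ x * b ^ (1 - x) := by
  rcases (ha.trans hab).eq_or_lt with rfl | hb
  · obtain rfl : a = 0 := le_antisymm hab ha
    rcases eq_or_ne y 0 with rfl | hy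
    · simp only [Real.rpow_zero, sub_zero, Real.rpow_one, mul_zero]
      positivity
    · rw [Real.zero_rpow hy, zero_mul]
      positivity
  · have key : ∀ t : ℝ, a ^ t * b ^ (1 - t) = b * (a / b) ^ t := fun t => by
      rw [Real.div_rpow ha hb.le, Real.rpow_sub hb, Real.rpow_one]
      field_simp
    rw [key, key]
    exact mul_le_mul_of_nonneg_left
      (Real.rpow_le_rpow_of_exponent_ge' (by positivity) (div_le_one_of_le₀ hab hb.le) hx hxy) hb.le

namespace Complex

lemma normSq_add_one_sub_normSq_sub_one (w : ℂ) :
    normSq (w + 1) - normSq (w - 1) = 4 * w.re := by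
  simp only [normSq_apply, add_re, add_im, sub_re, sub_im, one_re, one_im]
  ring

lemma cayley_im (w : ℂ) : ((w - 1) / (w + 1)).im = 2 * w.im / normSq (w + 1) := by
  rw [div_im, ← sub_div]
  congr 1
  simp only [add_re, add_im, sub_re, sub_im, one_re, one_im]
  ring

lemma add_one_ne_zero_of_re_nonneg {w : ℂ} (hw : 0 ≤ w.re) : w + 1 ≠ 0 := by
  intro h
  have := congrArg re h
  simp only [add_re, one_re, zero_re] at this
  linarith

lemma norm_cayley_le {w : ℂ} (hw : 0 ≤ w.re) : ‖(w - 1) / (w + 1)‖ ≤ 1 := by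
  have h := normSq_add_one_sub_normSq_sub_one w
  rw [norm_div, div_le_one (norm_pos_iff.mpr (add_one_ne_zero_of_re_nonneg hw)),
    ← sq_le_sq₀ (norm_nonneg _) (norm_nonneg _), Complex.sq_norm, Complex.sq_norm]
  linarith

lemma norm_cayley_lt {w : ℂ} (hw : 0 < w.re) : ‖(w - 1) / (w + 1)‖ < 1 := by
  have h := normSq_add_one_sub_normSq_sub_one w
  rw [norm_div, div_lt_one (norm_pos_iff.mpr (add_one_ne_zero_of_re_nonneg hw.le)),
    ← sq_lt_sq₀ (norm_nonneg _) (norm_nonneg _), Complex.sq_norm, Complex.sq_norm]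
  linarith

lemma one_sub_ne_zero_of_norm_lt_one {p : ℂ} (hp : ‖p‖ < 1) : 1 - p ≠ 0 := by
  rintro h
  rw [← sub_eq_zero.mp h, norm_one] at hp
  exact hp.false

lemma one_add_div_one_sub_re_pos {p : ℂ} (hp : ‖p‖ < 1) : 0 < ((1 + p) / (1 - p)).re := by
  have hnum : (1 + p).re * (1 - p).re + (1 + p).im * (1 - p).im = 1 - normSq p := by
    simp only [add_re, add_im, sub_re, sub_im, one_re, one_im, normSq_apply]
    ring
  have hp2 : normSq p < 1 := by
    rw [← Complex.sq_norm]
    nlinarith [norm_nonneg p]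
  rw [div_re, ← add_div, hnum]
  exact div_pos (by linarith) (normSq_pos.mpr (one_sub_ne_zero_of_norm_lt_one hp))

lemma one_add_div_one_sub_im (p : ℂ) : ((1 + p) / (1 - p)).im = 2 * p.im / normSq (1 - p) := by
  rw [div_im, ← sub_div]
  congr 1
  simp only [add_re, add_im, sub_re, sub_im, one_re, one_im]
  ring

end Complex

open Complex

def stripToHalfDisk (s : ℂ) : ℂ := (exp (π / 2 * I * s) - 1) / (exp (π / 2 * I * s) + 1)

def halfDiskToStrip (p : ℂ) : ℂ := 2 / (π * I) * log ((1 + p) / (1 - p))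

lemma exp_pi_div_two_mul_I_re (s : ℂ) :
    (exp (π / 2 * I * s)).re = Real.exp (-(π / 2 * s.im)) * Real.cos (π / 2 * s.re) := by
  rw [exp_re]
  congr 2 <;> simp

lemma exp_pi_div_two_mul_I_im (s : ℂ) :
    (exp (π / 2 * I * s)).im = Real.exp (-(π / 2 * s.im)) * Real.sin (π / 2 * s.re) := by
  rw [exp_im]
  congr 2 <;> simp

lemma exp_pi_div_two_mul_I_re_nonneg {s : ℂ} (hs : s ∈ verticalClosedStrip 0 1) :
    0 ≤ (exp (π / 2 * I * s)).re := by
  obtain ⟨h0, h1⟩ : 0 ≤ s.re ∧ s.re ≤ 1 := hs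
  rw [exp_pi_div_two_mul_I_re]
  exact mul_nonneg (Real.exp_nonneg _)
    (Real.cos_nonneg_of_mem_Icc ⟨by nlinarith [Real.pi_pos], by nlinarith [Real.pi_pos]⟩)

lemma mapsTo_stripToHalfDisk_closed :
    MapsTo stripToHalfDisk (verticalClosedStrip 0 1) (closedBall 0 1 ∩ {z | 0 ≤ z.im}) := by
  intro s hs
  refine ⟨mem_closedBall_zero_iff.mpr (norm_cayley_le (exp_pi_div_two_mul_I_re_nonneg hs)), ?_⟩
  obtain ⟨h0, h1⟩ : 0 ≤ s.re ∧ s.re ≤ 1 := hs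
  show 0 ≤ (stripToHalfDisk s).im
  rw [stripToHalfDisk, cayley_im, exp_pi_div_two_mul_I_im]
  have : 0 ≤ Real.sin (π / 2 * s.re) :=
    Real.sin_nonneg_of_nonneg_of_le_pi (by positivity) (by nlinarith [Real.pi_pos])
  exact div_nonneg (by positivity) (normSq_nonneg _)

lemma mapsTo_stripToHalfDisk_open :
    MapsTo stripToHalfDisk (verticalStrip 0 1) (ball 0 1 ∩ {z | 0 < z.im}) := by
  intro s hs
  obtain ⟨h0, h1⟩ : 0 < s.re ∧ s.re < 1 := hs
  have hπ := Real.pi_pos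
  have hre : 0 < (exp (π / 2 * I * s)).re := by
    rw [exp_pi_div_two_mul_I_re]
    exact mul_pos (Real.exp_pos _) (Real.cos_pos_of_mem_Ioo ⟨by nlinarith, by nlinarith⟩)
  refine ⟨mem_ball_zero_iff.mpr (norm_cayley_lt hre), ?_⟩
  show 0 < (stripToHalfDisk s).im
  rw [stripToHalfDisk, cayley_im, exp_pi_div_two_mul_I_im]
  have : 0 < Real.sin (π / 2 * s.re) := Real.sin_pos_of_pos_of_lt_pi (by positivity) (by nlinarith)
  have : 0 < normSq (exp (π / 2 * I * s) + 1) :=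
    normSq_pos.mpr (add_one_ne_zero_of_re_nonneg hre.le)
  exact div_pos (by positivity) this

lemma stripToHalfDisk_im_eq_zero {s : ℂ} (hs : s.re = 0) : (stripToHalfDisk s).im = 0 := by
  rw [stripToHalfDisk, cayley_im, exp_pi_div_two_mul_I_im, hs]
  simp

lemma differentiableAt_stripToHalfDisk {s : ℂ} (hs : s ∈ verticalClosedStrip 0 1) :
    DifferentiableAt ℂ stripToHalfDisk s :=
  ((differentiableAt_id.const_mul _).cexp.sub_const 1).div
    ((differentiableAt_id.const_mul _).cexp.add_const 1)
    (add_one_ne_zero_of_re_nonneg (exp_pi_div_two_mul_I_re_nonneg hs))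

lemma stripToHalfDisk_halfDiskToStrip {p : ℂ} (hp : ‖p‖ < 1) :
    stripToHalfDisk (halfDiskToStrip p) = p := by
  have hw : (1 + p) / (1 - p) ≠ 0 := by
    intro h
    simpa [h] using one_add_div_one_sub_re_pos hp
  have hexp : exp (π / 2 * I * halfDiskToStrip p) = (1 + p) / (1 - p) := by
    rw [halfDiskToStrip, ← exp_log hw]
    congr 1
    field_simp
    simp [exp_log hw]
  have h1 := one_sub_ne_zero_of_norm_lt_one hp
  rw [stripToHalfDisk, hexp]
  field_simp
  ring

lemma halfDiskToStrip_re (p : ℂ) : (halfDiskToStrip p).re = 2 / π * arg ((1 + p) / (1 - p)) := by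
  rw [halfDiskToStrip, div_mul_eq_mul_div, div_re]
  simp [log_im]
  field_simp

lemma halfDiskToStrip_re_mem_Ico {p : ℂ} (hp : ‖p‖ < 1) (him : 0 ≤ p.im) :
    (halfDiskToStrip p).re ∈ Ico 0 1 := by
  have hπ := Real.pi_pos
  have hre := one_add_div_one_sub_re_pos hp
  have harg0 : 0 ≤ arg ((1 + p) / (1 - p)) := by
    rw [arg_nonneg_iff, one_add_div_one_sub_im]
    exact div_nonneg (mul_nonneg zero_le_two him) (normSq_nonneg _)
  have harg1 : arg ((1 + p) / (1 - p)) < π / 2 := arg_lt_pi_div_two_iff.mpr (Or.inl hre)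
  rw [halfDiskToStrip_re]
  constructor
  · positivity
  · calc 2 / π * arg ((1 + p) / (1 - p)) < 2 / π * (π / 2) := by gcongr
      _ = 1 := by field_simp

lemma continuousAt_halfDiskToStrip {p : ℂ} (hp : ‖p‖ < 1) : ContinuousAt halfDiskToStrip p :=
  ((continuousAt_const.add continuousAt_id).div (continuousAt_const.sub continuousAt_id)
    (one_sub_ne_zero_of_norm_lt_one hp)).clog
    (Or.inl (one_add_div_one_sub_re_pos hp)) |>.const_mul _

lemma closure_verticalStrip_subset (a b : ℝ) :
    closure (verticalStrip a b) ⊆ verticalClosedStrip a b :=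
  closure_minimal (fun _ hs => Ioo_subset_Icc_self hs) (isClosed_Icc.preimage continuous_re)

lemma norm_le_interp_of_upperHalfDisk {f : ℂ → ℂ} {a b : ℝ}
    (hc : ContinuousOn f (closedBall 0 1 ∩ {z | 0 ≤ z.im}))
    (hd : DifferentiableOn ℂ f (ball 0 1 ∩ {z | 0 < z.im}))
    (ha : ∀ x : ℝ, |x| ≤ 1 → ‖f x‖ ≤ a) (hb : ∀ z ∈ closedBall 0 1 ∩ {z | 0 ≤ z.im}, ‖f z‖ ≤ b)
    {p : ℂ} (hp : ‖p‖ < 1) (him : 0 ≤ p.im) :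
    ‖f p‖ ≤ a ^ (1 - (halfDiskToStrip p).re) * b ^ (halfDiskToStrip p).re := by
  have hs : halfDiskToStrip p ∈ verticalClosedStrip 0 1 :=
    Ico_subset_Icc_self (halfDiskToStrip_re_mem_Ico hp him)
  have hG : DiffContOnCl ℂ (f ∘ stripToHalfDisk) (verticalStrip 0 1) :=
    ⟨hd.comp (fun s hs => (differentiableAt_stripToHalfDisk
        (Ioo_subset_Icc_self hs)).differentiableWithinAt) mapsTo_stripToHalfDisk_open,
      (hc.comp (fun s hs => (differentiableAt_stripToHalfDisk hs).continuousAt.continuousWithinAt)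
        mapsTo_stripToHalfDisk_closed).mono (closure_verticalStrip_subset 0 1)⟩
  have hB : BddAbove ((norm ∘ f ∘ stripToHalfDisk) '' verticalClosedStrip 0 1) :=
    ⟨b, by rintro _ ⟨s, hs, rfl⟩; exact hb _ (mapsTo_stripToHalfDisk_closed hs)⟩
  have hleft : ∀ s ∈ re ⁻¹' {0}, ‖(f ∘ stripToHalfDisk) s‖ ≤ a := by
    intro s (hs : s.re = 0)
    have hmem := mapsTo_stripToHalfDisk_closed (show s ∈ verticalClosedStrip 0 1 by
      simp [verticalClosedStrip, hs])
    have hreal : ((stripToHalfDisk s).re : ℂ) = stripToHalfDisk s :=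
      ext rfl (by simp [stripToHalfDisk_im_eq_zero hs])
    rw [Function.comp_apply, ← hreal]
    refine ha _ ((abs_re_le_norm _).trans ?_)
    simpa using hmem.1
  have hright : ∀ s ∈ re ⁻¹' {1}, ‖(f ∘ stripToHalfDisk) s‖ ≤ b := fun s (hs : s.re = 1) =>
    hb _ (mapsTo_stripToHalfDisk_closed (by simp [verticalClosedStrip, hs]))
  have := norm_le_interp_of_mem_verticalClosedStrip' zero_lt_one hs hG hB hleft hright
  simpa [stripToHalfDisk_halfDiskToStrip hp] using this

lemma norm_le_interp_of_halfDisk {x ρ σ : ℝ} (hρ : 0 < ρ) (hσ : |σ| = 1) {f : ℂ → ℂ} {a b : ℝ}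
    (hc : ContinuousOn f (closedBall (x : ℂ) ρ ∩ {z | 0 ≤ σ * z.im}))
    (hd : DifferentiableOn ℂ f (ball (x : ℂ) ρ ∩ {z | 0 < σ * z.im}))
    (ha : ∀ y : ℝ, |y - x| ≤ ρ → ‖f y‖ ≤ a)
    (hb : ∀ z ∈ closedBall (x : ℂ) ρ ∩ {z | 0 ≤ σ * z.im}, ‖f z‖ ≤ b)
    {p : ℂ} (hp : ‖p‖ < 1) (him : 0 ≤ p.im) :
    ‖f (x + ((σ * ρ : ℝ) : ℂ) * p)‖ ≤
      a ^ (1 - (halfDiskToStrip p).re) * b ^ (halfDiskToStrip p).re := by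
  set e : ℂ → ℂ := fun p => x + ((σ * ρ : ℝ) : ℂ) * p
  have he_dist : ∀ p, ‖e p - x‖ = ρ * ‖p‖ := fun p => by
    simp [e, hσ, abs_of_pos hρ]
  have he_im : ∀ p, σ * (e p).im = ρ * p.im := fun p => by
    have hσσ : σ * σ = 1 := by rw [← sq, ← sq_abs, hσ, one_pow]
    simp only [e, add_im, ofReal_im, im_ofReal_mul, zero_add]
    linear_combination ρ * p.im * hσσ
  have he_closed : MapsTo e (closedBall 0 1 ∩ {p | 0 ≤ p.im})
      (closedBall (x : ℂ) ρ ∩ {z | 0 ≤ σ * z.im}) := fun p ⟨hp, hpim⟩ => by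
    refine ⟨?_, ?_⟩
    · rw [mem_closedBall, dist_eq_norm, he_dist]
      have : ‖p‖ ≤ 1 := by simpa using hp
      nlinarith
    · show 0 ≤ σ * (e p).im
      rw [he_im]
      exact mul_nonneg hρ.le hpim
  have he_open : MapsTo e (ball 0 1 ∩ {p | 0 < p.im})
      (ball (x : ℂ) ρ ∩ {z | 0 < σ * z.im}) := fun p ⟨hp, hpim⟩ => by
    refine ⟨?_, ?_⟩
    · rw [mem_ball, dist_eq_norm, he_dist]
      have : ‖p‖ < 1 := by simpa using hp
      nlinarith
    · show 0 < σ * (e p).im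
      rw [he_im]
      exact mul_pos hρ hpim
  have he_diff : Differentiable ℂ e := (differentiable_id.const_mul _).const_add _
  have he_real : ∀ y : ℝ, |y| ≤ 1 → ‖f (e y)‖ ≤ a := fun y hy => by
    have : e y = ((x + σ * ρ * y : ℝ) : ℂ) := by simp [e]
    rw [this]
    refine ha _ ?_
    rw [add_sub_cancel_left, abs_mul, abs_mul, hσ, abs_of_pos hρ]
    nlinarith
  exact norm_le_interp_of_upperHalfDisk (f := f ∘ e)
    (hc.comp he_diff.continuous.continuousOn he_closed) (hd.comp he_diff.differentiableOn he_open)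
    he_real (fun p hp => hb _ (he_closed hp)) hp him

theorem exists_halfDisk_interpolation {t : ℝ} (ht0 : 0 ≤ t) (ht : t < 1) :
    ∃ c ∈ Ioc (0 : ℝ) 1, ∀ {x ρ σ : ℝ}, 0 < ρ → |σ| = 1 → ∀ {f : ℂ → ℂ} {a b : ℝ},
      0 ≤ a → a ≤ b →
      ContinuousOn f (closedBall (x : ℂ) ρ ∩ {z | 0 ≤ σ * z.im}) →
      DifferentiableOn ℂ f (ball (x : ℂ) ρ ∩ {z | 0 < σ * z.im}) →
      (∀ y : ℝ, |y - x| ≤ ρ → ‖f y‖ ≤ a) →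
      (∀ z ∈ closedBall (x : ℂ) ρ ∩ {z | 0 ≤ σ * z.im}, ‖f z‖ ≤ b) →
      ∀ z : ℂ, ‖z - x‖ ≤ t * ρ → 0 ≤ σ * z.im → ‖f z‖ ≤ a ^ c * b ^ (1 - c) := by
  set K := closedBall (0 : ℂ) t ∩ {p | 0 ≤ p.im}
  have hK : IsCompact K :=
    (isCompact_closedBall 0 t).inter_right (isClosed_le continuous_const continuous_im)
  have hK1 : ∀ p ∈ K, ‖p‖ < 1 := fun p hp => (mem_closedBall_zero_iff.mp hp.1).trans_lt ht
  obtain ⟨p₀, hp₀, hmax⟩ := hK.exists_isMaxOn (f := fun p => (halfDiskToStrip p).re)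
    ⟨0, by simpa [K] using ht0⟩
    (fun p hp => (continuous_re.continuousAt.comp
      (continuousAt_halfDiskToStrip (hK1 p hp))).continuousWithinAt)
  obtain ⟨hM0, hM1⟩ := halfDiskToStrip_re_mem_Ico (hK1 p₀ hp₀) hp₀.2
  refine ⟨1 - (halfDiskToStrip p₀).re, ⟨by linarith, by linarith⟩, ?_⟩
  intro x ρ σ hρ hσ f a b ha hab hc hd hfa hfb z hz hzim
  set p : ℂ := σ * (z - x) / ρ
  have hρC : (ρ : ℂ) ≠ 0 := by exact_mod_cast hρ.ne'
  have hσC : (σ : ℂ) * σ = 1 := by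
    exact_mod_cast show σ * σ = 1 by rw [← sq, ← sq_abs, hσ, one_pow]
  have hzp : z = x + ((σ * ρ : ℝ) : ℂ) * p := by
    simp only [p]
    push_cast
    field_simp
    linear_combination -(z - x) * hσC
  have hpK : p ∈ K := by
    refine ⟨?_, ?_⟩
    · rw [mem_closedBall_zero_iff, norm_div, norm_mul, norm_real, norm_real, Real.norm_eq_abs,
        Real.norm_eq_abs, hσ, abs_of_pos hρ, one_mul, div_le_iff₀ hρ]
      exact hz
    · show 0 ≤ p.im
      rw [div_ofReal_im, mul_im]
      simpa using div_nonneg hzim hρ.le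
  have hre := halfDiskToStrip_re_mem_Ico (hK1 p hpK) hpK.2
  calc ‖f z‖ ≤ a ^ (1 - (halfDiskToStrip p).re) * b ^ (1 - (1 - (halfDiskToStrip p).re)) := by
        rw [sub_sub_cancel, hzp]
        exact norm_le_interp_of_halfDisk hρ hσ hc hd hfa hfb (hK1 p hpK) hpK.2
    _ ≤ a ^ (1 - (halfDiskToStrip p₀).re) * b ^ (1 - (1 - (halfDiskToStrip p₀).re)) :=
        rpow_mul_rpow_one_sub_le_of_le ha hab (by linarith)
          (by linarith [isMaxOn_iff.mp hmax p hpK])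

lemma moebius_coe_of_ne_zero {g : SL2R} {z : ℂ} (h : mC g * z + mD g ≠ 0) :
    moebius g z = moebiusC g z := by
  simp only [moebius, if_neg h, moebiusC]

lemma moebius_inv_moebiusC {g : SL2R} {z : ℂ} (h : mC g * z + mD g ≠ 0) :
    moebius g⁻¹ (moebiusC g z) = z := by
  have hinv : mA g⁻¹ = mD g ∧ mB g⁻¹ = -mB g ∧ mC g⁻¹ = -mC g ∧ mD g⁻¹ = mA g := by
    simp [Matrix.SpecialLinearGroup.SL2_inv_expl g, mA, mB, mC, mD]
  have hdet : mA g * mD g - mB g * mC g = 1 := by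
    have := g.2
    rw [Matrix.det_fin_two] at this
    simp only [mA, mB, mC, mD]
    exact_mod_cast this
  obtain ⟨hA, hB, hC, hD⟩ := hinv
  have hden : mC g⁻¹ * moebiusC g z + mD g⁻¹ = 1 / (mC g * z + mD g) := by
    rw [hC, hD, moebiusC]
    field_simp
    linear_combination hdet
  rw [moebius_coe_of_ne_zero (by rw [hden]; exact one_div_ne_zero h), OnePoint.coe_eq_coe,
    moebiusC, hden, hA, hB, moebiusC]
  have : z * mC g + mD g ≠ 0 := by rwa [mul_comm]
  field_simp
  linear_combination z * hdet

lemma bar_bar {r : ℕ} (a : Fin (2 * r)) : bar (bar a) = a := by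
  have := a.isLt
  unfold bar
  split_ifs with h₁ h₂ h₂ <;> ext <;> simp only at h₂ ⊢ <;> omega

namespace Schottky

variable {r : ℕ} (S : Schottky r)

lemma moebius_mem_disk {a : Fin (2 * r)} {z : ℂ} (hz : z ∉ interior (S.disk (bar a))) :
    moebius (S.γ a) z ∈ ((↑) : ℂ → OnePoint ℂ) '' S.disk a := by
  rw [disk, ← S.γ_maps a]
  exact ⟨z, ⟨mem_univ _, fun ⟨w, hw, hwz⟩ => hz (OnePoint.coe_injective hwz ▸ hw)⟩, rfl⟩

lemma moebius_disk_mem_disk {a b : Fin (2 * r)} (hab : b ≠ bar a) {z : ℂ} (hz : z ∈ S.disk b) :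
    moebius (S.γ a) z ∈ ((↑) : ℂ → OnePoint ℂ) '' S.disk a :=
  S.moebius_mem_disk fun hz' => disjoint_left.mp (S.disj hab) hz (interior_subset hz')

lemma moebius_denom_ne_zero {a b : Fin (2 * r)} (hab : b ≠ bar a) {z : ℂ} (hz : z ∈ S.disk b) :
    mC (S.γ a) * z + mD (S.γ a) ≠ 0 := fun h => by
  obtain ⟨w, -, hw⟩ := S.moebius_disk_mem_disk hab hz
  simp only [moebius, if_pos h] at hw
  exact OnePoint.coe_ne_infty w hw

lemma wdisk_pair {a b : Fin (2 * r)} (hab : b ≠ bar a) :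
    S.wdisk [a, b] = moebiusC (S.γ a) '' S.disk b := by
  ext w
  simp only [wdisk, sdisk, List.dropLast, List.getLast, g, List.map, List.prod_cons,
    List.prod_nil, mul_one, mem_image, exists_exists_and_eq_and]
  refine exists_congr fun z => and_congr_right fun hz => ?_
  rw [moebius_coe_of_ne_zero (S.moebius_denom_ne_zero hab hz), OnePoint.coe_eq_coe]

lemma isCompact_wdisk_pair {a b : Fin (2 * r)} (hab : b ≠ bar a) :
    IsCompact (S.wdisk [a, b]) := by
  rw [S.wdisk_pair hab]
  exact (isCompact_closedBall _ _).image_of_continuousOn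
    ((continuousOn_const.mul continuousOn_id).add continuousOn_const |>.div
      ((continuousOn_const.mul continuousOn_id).add continuousOn_const)
      fun z hz => S.moebius_denom_ne_zero hab hz)

lemma wdisk_pair_subset_ball {a b : Fin (2 * r)} (hab : b ≠ bar a) :
    S.wdisk [a, b] ⊆ ball (S.center a : ℂ) (S.radius a) := by
  rw [S.wdisk_pair hab, ← interior_closedBall _ (S.radius_pos a).ne']
  rintro _ ⟨z, hz, rfl⟩
  by_contra hint
  -- `γ_ā` maps the complement of the interior of `D_a` into `D_ā`, and undoes `γ_a`.
  obtain ⟨v, hv, hvz⟩ := S.moebius_mem_disk (a := bar a) (z := moebiusC (S.γ a) z)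
    (by rwa [bar_bar])
  rw [S.γ_bar, moebius_inv_moebiusC (S.moebius_denom_ne_zero hab hz), OnePoint.coe_eq_coe] at hvz
  exact disjoint_left.mp (S.disj hab) hz (hvz ▸ hv)

lemma exists_wdisk_pair_subset_closedBall :
    ∃ t ∈ Ioo (0 : ℝ) 1, ∀ a b : Fin (2 * r), b ≠ bar a →
      ∀ z ∈ S.wdisk [a, b], ‖z - S.center a‖ ≤ t * S.radius a := by
  set normalize : Fin (2 * r) → ℂ → ℂ := fun a z => (z - S.center a) / S.radius a
  have hnorm : ∀ a z, ‖normalize a z‖ = ‖z - S.center a‖ / S.radius a := fun a z => by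
    simp [normalize, abs_of_pos (S.radius_pos a)]
  set K := ⋃ a, ⋃ b, ⋃ (_ : b ≠ bar a), normalize a '' S.wdisk [a, b]
  have hK : IsCompact K := isCompact_iUnion fun a => isCompact_iUnion fun b =>
    isCompact_iUnion fun hab => (S.isCompact_wdisk_pair hab).image (by fun_prop)
  have hK1 : K ⊆ ball 0 1 := by
    simp only [K, iUnion_subset_iff]
    rintro a b hab _ ⟨z, hz, rfl⟩
    rw [mem_ball_zero_iff, hnorm, div_lt_one (S.radius_pos a), ← dist_eq_norm]
    exact S.wdisk_pair_subset_ball hab hz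
  obtain ⟨t, ht, hKt⟩ := exists_pos_lt_subset_ball zero_lt_one hK.isClosed hK1
  refine ⟨t, ht, fun a b hab z hz => ?_⟩
  have := hKt (mem_iUnion_of_mem a (mem_iUnion₂_of_mem (i := b) hab ⟨z, hz, rfl⟩))
  rw [mem_ball_zero_iff, hnorm, div_lt_iff₀ (S.radius_pos a)] at this
  exact this.le

lemma isCompact_D : IsCompact S.D := isCompact_iUnion fun _ => isCompact_closedBall _ _

lemma disk_subset_D (a : Fin (2 * r)) : S.disk a ⊆ S.D := subset_iUnion S.disk a

lemma ball_inter_subset_interior (a : Fin (2 * r)) (σ : ℝ) :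
    ball (S.center a : ℂ) (S.radius a) ∩ {z | 0 < σ * z.im} ⊆
      interior (S.D ∩ {z | 0 ≤ σ * z.im}) :=
  interior_maximal
    (inter_subset_inter (ball_subset_closedBall.trans (S.disk_subset_D a))
      (ofPred_subset_ofPred.mpr fun _ => le_of_lt))
    (isOpen_ball.inter (isOpen_lt continuous_const (by fun_prop)))

lemma ofReal_mem_Ire {a : Fin (2 * r)} {y : ℝ} (hy : |y - S.center a| ≤ S.radius a) :
    y ∈ S.Ire :=
  S.disk_subset_D a (by rwa [disk, mem_closedBall, dist_eq_norm, ← ofReal_sub, norm_real,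
    Real.norm_eq_abs])

end Schottky

/-- There is `c ∈ (0,1]` depending only on the Schottky data such that for
either sign `σ = ±1`, any `f` continuous on `D^± = D ∩ {±Im z ≥ 0}` and holomorphic on its
interior satisfies `sup_{D₂^±}|f| ≤ (sup_I |f|)^c (sup_{D^±}|f|)^{1−c}`. -/
theorem stmt2 {r : ℕ} (S : Schottky r) :
    ∃ c : ℝ, c ∈ Set.Ioc (0 : ℝ) 1 ∧ ∀ σ : ℝ, σ = 1 ∨ σ = -1 →
      ∀ f : ℂ → ℂ, ContinuousOn f (S.D ∩ {z : ℂ | 0 ≤ σ * z.im}) →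
        DifferentiableOn ℂ f (interior (S.D ∩ {z : ℂ | 0 ≤ σ * z.im})) →
        sSup ((fun z => ‖f z‖) '' (S.D₂ ∩ {z : ℂ | 0 ≤ σ * z.im}))
          ≤ (sSup ((fun x : ℝ => ‖f ((x : ℝ) : ℂ)‖) '' S.Ire)) ^ c *
            (sSup ((fun z => ‖f z‖) '' (S.D ∩ {z : ℂ | 0 ≤ σ * z.im}))) ^ (1 - c) := by
  obtain ⟨t, ht, hD₂⟩ := S.exists_wdisk_pair_subset_closedBall
  obtain ⟨c, hc, hinterp⟩ := exists_halfDisk_interpolation ht.1.le ht.2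
  refine ⟨c, hc, fun σ hσ f hcont hdiff => ?_⟩
  set H := {z : ℂ | 0 ≤ σ * z.im}
  set MI := sSup ((fun x : ℝ => ‖f x‖) '' S.Ire)
  set MD := sSup ((fun z => ‖f z‖) '' (S.D ∩ H))
  have hbdd : BddAbove ((fun z => ‖f z‖) '' (S.D ∩ H)) :=
    ((S.isCompact_D.inter_right (isClosed_le continuous_const (by fun_prop))).image_of_continuousOn
      hcont.norm).bddAbove
  have hIH : ∀ y ∈ S.Ire, (y : ℂ) ∈ S.D ∩ H := fun y hy => ⟨hy, by simp [H]⟩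
  have hIbdd : BddAbove ((fun x : ℝ => ‖f x‖) '' S.Ire) :=
    hbdd.mono (by rintro _ ⟨y, hy, rfl⟩; exact ⟨y, hIH y hy, rfl⟩)
  have hMI : 0 ≤ MI := Real.sSup_nonneg (by rintro _ ⟨y, -, rfl⟩; exact norm_nonneg _)
  have hMIMD : MI ≤ MD :=
    Real.sSup_le (by rintro _ ⟨y, hy, rfl⟩; exact le_csSup hbdd ⟨y, hIH y hy, rfl⟩)
      (Real.sSup_nonneg (by rintro _ ⟨z, -, rfl⟩; exact norm_nonneg _))
  refine Real.sSup_le ?_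
    (mul_nonneg (Real.rpow_nonneg hMI _) (Real.rpow_nonneg (hMI.trans hMIMD) _))
  rintro _ ⟨z, ⟨hz, hzH⟩, rfl⟩
  obtain ⟨a, b, hab, hz⟩ : ∃ a b, b ≠ bar a ∧ z ∈ S.wdisk [a, b] := by
    simpa [Schottky.D₂] using hz
  exact hinterp (S.radius_pos a) (by rcases hσ with rfl | rfl <;> simp) hMI hMIMD
    (hcont.mono (inter_subset_inter_left H (S.disk_subset_D a)))
    (hdiff.mono (S.ball_inter_subset_interior a σ))
    (fun y hy => le_csSup hIbdd ⟨y, S.ofReal_mem_Ire hy, rfl⟩)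
    (fun w hw => le_csSup hbdd ⟨w, ⟨S.disk_subset_D a hw.1, hw.2⟩, rfl⟩) z (hD₂ a b hab z hz) hzH
end
end
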